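/- Let J be a finite set of jobs that is feasible on m machines. Then for every finite set I ⊆ ℤ, the total contribution satisfies C(J, I) ≤ m·|I|. (This is the easy direction of the paper's characterization of the optimum.) -/

import Mathlib

/-- A job given by integer release date `r`, deadline `d`, and processing time `p`. -/
structure Job where
  r : ℤ
  d : ℤ
  p : ℤ
deriving DecidableEq

/-- A job is valid if `1 ≤ p` and `r + p ≤ d`. -/
def Job.valid (j : Job) : Prop := 1 ≤ j.p ∧ j.r + j.p ≤ j.d

/-- The interval `I(j) = {t ∈ ℤ : r ≤ t < d}` of a job. -/
noncomputable def Job.interval (j : Job) : Finset ℤ := Finset.Ico j.r j.d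

/-- The laxity `ℓ_j = d - r - p` of a job. -/
def Job.lax (j : Job) : ℤ := j.d - j.r - j.p

/-- The contribution `C(j, I) = max {0, |I ∩ I(j)| - ℓ_j}` of a job to a finite set `I ⊆ ℤ`. -/
noncomputable def contribution (j : Job) (I : Finset ℤ) : ℤ :=
  max 0 (((I ∩ j.interval).card : ℤ) - j.lax)

/-- A finite set of jobs `J` is feasible on `m` machines. -/
def Feasible (J : Finset Job) (m : ℕ) : Prop :=
  ∃ σ : ℤ → Finset Job,
    (∀ t, σ t ⊆ J) ∧
    (∀ t, (σ t).card ≤ m) ∧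
    (∀ t, ∀ j ∈ σ t, j.r ≤ t ∧ t < j.d) ∧
    (∀ j ∈ J, ((Finset.Ico j.r j.d).filter (fun t => j ∈ σ t)).card = j.p.toNat)

/-! A job is processed in `p_j` slots of `I(j)`; outside `I` there are only `|I(j)| - |I ∩ I(j)|`
of them, so at least `C(j, I)` of its slots lie in `I`. Each slot of `I` is used by at most `m`
jobs, so counting pairs (job, slot in `I`) gives `C(J, I) ≤ m·|I|`. -/

open Finset

theorem Job.contribution_le_card_filter {j : Job} (hj : j.r ≤ j.d) (P : ℤ → Prop)
    [DecidablePred P] (hP : #{t ∈ j.interval | P t} = j.p.toNat) (I : Finset ℤ) :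
    contribution j I ≤ #{t ∈ I | P t} := by
  set T := {t ∈ j.interval | P t}
  have hunion : #(I ∩ j.interval ∪ T) ≤ #j.interval :=
    card_le_card (union_subset inter_subset_right (filter_subset _ _))
  have hinter : #(I ∩ j.interval ∩ T) ≤ #{t ∈ I | P t} :=
    card_le_card fun t ht => by
      simp only [T, mem_inter, mem_filter] at ht ⊢
      exact ⟨ht.1.1, ht.2.2⟩
  have hlen : (#j.interval : ℤ) = j.d - j.r := by simp [Job.interval, hj]
  have := card_union_add_card_inter (I ∩ j.interval) T
  unfold contribution Job.lax
  omega

theorem sum_card_filter_mem_le {α β : Type*} [DecidableEq α] (J : Finset α) (I : Finset β)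
    (σ : β → Finset α) {m : ℕ} (hσ : ∀ t ∈ I, #(σ t) ≤ m) :
    ∑ j ∈ J, #{t ∈ I | j ∈ σ t} ≤ m * #I := by
  have hswap := sum_card_bipartiteAbove_eq_sum_card_bipartiteBelow (s := J) (t := I)
    (fun j t => j ∈ σ t)
  simp only [bipartiteAbove, bipartiteBelow] at hswap
  rw [hswap, mul_comm, ← smul_eq_mul]
  exact sum_le_card_nsmul _ _ _ fun t ht =>
    (card_le_card fun j hj => (mem_filter.1 hj).2).trans (hσ t ht)

/-- If `J` is feasible on `m` machines, then `C(J, I) ≤ m·|I|`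
for every finite `I ⊆ ℤ`. -/
theorem contribution_le_of_feasible
    (J : Finset Job) (hJ : ∀ j ∈ J, j.valid) (m : ℕ)
    (hfeas : Feasible J m) (I : Finset ℤ) :
    ∑ j ∈ J, contribution j I ≤ (m : ℤ) * I.card := by
  obtain ⟨σ, -, hcard, -, hcount⟩ := hfeas
  calc ∑ j ∈ J, contribution j I
      ≤ ∑ j ∈ J, (#{t ∈ I | j ∈ σ t} : ℤ) := sum_le_sum fun j hj =>
        Job.contribution_le_card_filter (by obtain ⟨hp, hrd⟩ := hJ j hj; omega) _ (hcount j hj) I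
    _ ≤ m * #I := by exact_mod_cast sum_card_filter_mem_le J I σ fun t _ => hcard t
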